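/- Let E and F be finite-dimensional real normed vector spaces, x ∈ E, p ∈ F, and let Φ be a path-lifting map based at (x,p). Then there exists a unique linear map L : E →ₗ[ℝ] F such that for every smooth path α : ℝ → E with α(0) = x one has deriv (Φ α) 0 = L (deriv α 0). In particular, the horizontal set H = { deriv (Φ α) 0 | α : ℝ → E smooth, α(0) = x } is a linear subspace of F (namely the range of L). -/

import Mathlib

/-- A path-lifting map based at `(x, p)` for normed spaces `E` and `F`:
it assigns to each smooth path `α : ℝ → E` starting at `x` a path `Φ α : ℝ → F`
starting at `p`, sends the constant path to the constant path, is invariant under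
scaling reparametrizations, and is smooth in families. -/
structure PathLiftingMap (E F : Type*) [NormedAddCommGroup E] [NormedSpace ℝ E]
    [NormedAddCommGroup F] [NormedSpace ℝ F] (x : E) (p : F) where
  lift : (ℝ → E) → (ℝ → F)
  lift_init : ∀ α : ℝ → E, ContDiff ℝ (⊤ : ℕ∞) α → α 0 = x → lift α 0 = p
  lift_const : lift (fun _ => x) = fun _ => p
  lift_scale : ∀ ε : ℝ, ε ∈ Set.Icc (0 : ℝ) 1 → ∀ α : ℝ → E, ContDiff ℝ (⊤ : ℕ∞) α → α 0 = x →
    lift (fun t => α (ε * t)) = fun t => lift α (ε * t)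
  lift_smooth_families : ∀ k : ℕ, ∀ A : EuclideanSpace ℝ (Fin k) × ℝ → E,
    ContDiff ℝ (⊤ : ℕ∞) A → (∀ s : EuclideanSpace ℝ (Fin k), A (s, 0) = x) →
    ContDiff ℝ (⊤ : ℕ∞) (fun q : EuclideanSpace ℝ (Fin k) × ℝ => lift (fun t => A (q.1, t)) q.2)


section
variable {E F : Type*} [NormedAddCommGroup E] [NormedSpace ℝ E] [FiniteDimensional ℝ E]
    [NormedAddCommGroup F] [NormedSpace ℝ F] [FiniteDimensional ℝ F]
    {x : E} {p : F}

private lemma lift_contDiff (Φ : PathLiftingMap E F x p) {α : ℝ → E}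
    (hα : ContDiff ℝ (⊤ : ℕ∞) α) (hα0 : α 0 = x) : ContDiff ℝ (⊤ : ℕ∞) (Φ.lift α) := by
  have h := Φ.lift_smooth_families 0 (fun q => α q.2) (hα.comp contDiff_snd) (fun _ => hα0)
  have h2 := h.comp ((contDiff_const (c := (0 : EuclideanSpace ℝ (Fin 0)))).prodMk contDiff_id)
  exact h2

private lemma deriv_scale (Φ : PathLiftingMap E F x p) {ε : ℝ} (hε : ε ∈ Set.Icc (0:ℝ) 1)
    {α : ℝ → E} (hα : ContDiff ℝ (⊤ : ℕ∞) α) (hα0 : α 0 = x) :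
    deriv (Φ.lift (fun t => α (ε * t))) 0 = ε • deriv (Φ.lift α) 0 := by
  rw [Φ.lift_scale ε hε α hα hα0]
  have hd : DifferentiableAt ℝ (Φ.lift α) 0 :=
    ((lift_contDiff Φ hα hα0).differentiable (by simp)).differentiableAt
  have h1 : HasDerivAt (fun t : ℝ => ε * t) ε 0 := by
    simpa using (hasDerivAt_id (0:ℝ)).const_mul ε
  have h2 : HasDerivAt (Φ.lift α) (deriv (Φ.lift α) 0) (ε * 0) := by
    rw [mul_zero]; exact hd.hasDerivAt
  exact (h2.scomp 0 h1).deriv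

private lemma family_velocity (Φ : PathLiftingMap E F x p) (k : ℕ)
    (A : EuclideanSpace ℝ (Fin k) × ℝ → E) (hA : ContDiff ℝ (⊤ : ℕ∞) A)
    (hA0 : ∀ s, A (s, 0) = x) :
    ∃ ψ : EuclideanSpace ℝ (Fin k) → F, ContDiff ℝ (⊤ : ℕ∞) ψ ∧
      ∀ s, deriv (Φ.lift (fun t => A (s, t))) 0 = ψ s := by
  set G : EuclideanSpace ℝ (Fin k) × ℝ → F :=
    fun q => Φ.lift (fun t => A (q.1, t)) q.2 with hGdef
  have hG : ContDiff ℝ (⊤ : ℕ∞) G := Φ.lift_smooth_families k A hA hA0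
  refine ⟨fun s => fderiv ℝ G (s, 0) (0, 1), ?_, ?_⟩
  · have h1 : ContDiff ℝ (⊤ : ℕ∞) (fderiv ℝ G) := hG.fderiv_right (by simp)
    have h2 : ContDiff ℝ (⊤ : ℕ∞) (fun s : EuclideanSpace ℝ (Fin k) =>
        ((s, (0:ℝ)) : EuclideanSpace ℝ (Fin k) × ℝ)) := contDiff_id.prodMk contDiff_const
    exact (h1.comp h2).clm_apply contDiff_const
  · intro s
    have hGd : HasFDerivAt G (fderiv ℝ G (s, 0)) (s, 0) :=
      ((hG.differentiable (by simp)) (s, 0)).hasFDerivAt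
    have hc : HasDerivAt (fun t : ℝ => ((s, t) : EuclideanSpace ℝ (Fin k) × ℝ)) (0, 1) 0 :=
      (hasDerivAt_const (0:ℝ) s).prodMk (hasDerivAt_id 0)
    exact (hGd.comp_hasDerivAt 0 hc).deriv

private lemma deriv_eq_of_eqOn_Icc {f g : ℝ → F} {a b : F}
    (hf : HasDerivAt f a 0) (hg : HasDerivAt g b 0) (h : Set.EqOn f g (Set.Icc 0 1)) :
    a = b := by
  have h0 : (0:ℝ) ∈ Set.Icc (0:ℝ) 1 := Set.mem_Icc.2 ⟨le_refl 0, zero_le_one⟩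
  have hu : UniqueDiffWithinAt ℝ (Set.Icc (0:ℝ) 1) 0 := (uniqueDiffOn_Icc one_pos) 0 h0
  have hf' : HasDerivWithinAt g a (Set.Icc 0 1) 0 :=
    (hf.hasDerivWithinAt).congr (fun y hy => (h hy).symm) (h h0).symm
  rw [← hf'.derivWithin hu, (hg.hasDerivWithinAt).derivWithin hu]

set_option linter.unusedSectionVars false

open MeasureTheory in
private lemma hadamard_step {δ : ℝ → E} (hδ : ContDiff ℝ (⊤ : ℕ∞) δ) (h0 : δ 0 = 0) :
    ContDiff ℝ (⊤ : ℕ∞) (dslope δ 0) ∧ (∀ t : ℝ, δ t = t • dslope δ 0 t) ∧ dslope δ 0 0 = deriv δ 0 := by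
  refine ⟨?_, fun t => ?_, dslope_same δ 0⟩
  · have hδd : ContDiff ℝ (⊤ : ℕ∞) (deriv δ) := (contDiff_infty_iff_deriv.1 hδ).2
    have hδdiff : Differentiable ℝ δ := hδ.differentiable (by simp)
    let φ : ContDiffBump (0:ℝ) := ⟨2, 3, by norm_num, by norm_num⟩
    set f0 : ℝ → ℝ := Set.indicator (Set.Icc (0:ℝ) 1) (fun _ => 1) with hf0
    set g : ℝ → ℝ → E := fun t y => φ y • deriv δ (-y * t) with hgdef
    have hg : ContDiffOn ℝ (⊤ : ℕ∞) (fun q : ℝ × ℝ => g q.1 q.2) (Set.univ ×ˢ Set.univ) :=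
      ((φ.contDiff.comp contDiff_snd).smul
        (hδd.comp (contDiff_snd.neg.mul contDiff_fst))).contDiffOn
    have hgs : ∀ t y, t ∈ (Set.univ : Set ℝ) → y ∉ Metric.closedBall (0:ℝ) 3 → g t y = 0 := by
      intro t y _ hy
      have : φ y = 0 := by
        rw [← Function.notMem_support, φ.support_eq]
        exact fun h => hy (Metric.ball_subset_closedBall h)
      simp [hgdef, this]
    have hf : LocallyIntegrable f0 volume :=
      (continuous_const.integrableOn_Icc.integrable_indicator measurableSet_Icc).locallyIntegrable
    have H := contDiffOn_convolution_right_with_param (μ := volume)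
      (ContinuousLinearMap.lsmul ℝ ℝ) isOpen_univ (isCompact_closedBall (0:ℝ) 3) hgs hf hg
    rw [Set.univ_prod_univ, contDiffOn_univ] at H
    have K := H.comp (contDiff_id.prodMk (contDiff_const (c := (0:ℝ))))
    convert K using 1
    funext t
    simp only [Function.comp_apply, id, convolution_lsmul, hf0, hgdef]
    have h1 : ∀ u, Set.indicator (Set.Icc (0:ℝ) 1) (fun _ => (1:ℝ)) u • (φ (0 - u) • deriv δ (-(0 - u) * t))
        = Set.indicator (Set.Icc (0:ℝ) 1) (fun u => φ (0 - u) • deriv δ (-(0 - u) * t)) u := by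
      intro u
      by_cases hu : u ∈ Set.Icc (0:ℝ) 1 <;> simp [hu]
    simp_rw [h1]
    rw [integral_indicator measurableSet_Icc]
    have h2 : ∫ u in Set.Icc (0:ℝ) 1, φ (0 - u) • deriv δ (-(0 - u) * t)
        = ∫ u in Set.Icc (0:ℝ) 1, deriv δ (u * t) := by
      refine setIntegral_congr_fun measurableSet_Icc (fun u hu => ?_)
      have : φ (0 - u) = 1 := by
        apply φ.one_of_mem_closedBall
        rw [Metric.mem_closedBall, Real.dist_eq, abs_le]
        show -2 ≤ 0 - u - 0 ∧ 0 - u - 0 ≤ 2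
        constructor <;> linarith [hu.1, hu.2]
      rw [this, one_smul, neg_sub, sub_zero]
    rw [h2, integral_Icc_eq_integral_Ioc, ← intervalIntegral.integral_of_le zero_le_one]
    rcases eq_or_ne t 0 with rfl | ht
    · simp [dslope_same]
    · rw [dslope_of_ne _ ht, slope_def_module, intervalIntegral.integral_comp_mul_right _ ht,
        intervalIntegral.integral_deriv_eq_sub (fun y _ => hδdiff y)
          (hδd.continuous.intervalIntegrable _ _)]
      simp
  · have h := sub_smul_dslope δ 0 t
    rw [sub_zero, h0, sub_zero] at h
    exact h.symm



private lemma hadamard2 {β : ℝ → E} (hβ : ContDiff ℝ (⊤ : ℕ∞) β) (hβ0 : β 0 = x)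
    (hβ' : deriv β 0 = 0) :
    ∃ w : ℝ → E, ContDiff ℝ (⊤ : ℕ∞) w ∧ ∀ t : ℝ, β t = x + (t * t) • w t := by
  set δ : ℝ → E := fun t => β t - x with hδdef
  have hδ : ContDiff ℝ (⊤ : ℕ∞) δ := hβ.sub contDiff_const
  have hδ0 : δ 0 = 0 := by simp [hδdef, hβ0]
  have hδ' : deriv δ 0 = 0 := by
    rw [hδdef, deriv_sub_const, hβ']
  obtain ⟨h1, h2, h3⟩ := hadamard_step hδ hδ0
  have hδ10 : dslope δ 0 0 = 0 := by rw [h3, hδ']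
  obtain ⟨g1, g2, _⟩ := hadamard_step h1 hδ10
  refine ⟨dslope (dslope δ 0) 0, g1, fun t => ?_⟩
  have hid : δ t = (t * t) • dslope (dslope δ 0) 0 t := by
    rw [h2 t, g2 t, smul_smul]
  have : β t = x + δ t := by simp [hδdef]
  rw [this, hid]

private lemma deriv_lift_zero_of_deriv_zero (Φ : PathLiftingMap E F x p) {β : ℝ → E}
    (hβ : ContDiff ℝ (⊤ : ℕ∞) β) (hβ0 : β 0 = x) (hβ' : deriv β 0 = 0) :
    deriv (Φ.lift β) 0 = 0 := by
  obtain ⟨w, hw, hwid⟩ := hadamard2 hβ hβ0 hβ'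
  set e0 : EuclideanSpace ℝ (Fin 2) := EuclideanSpace.single 0 1 with he0
  set e1 : EuclideanSpace ℝ (Fin 2) := EuclideanSpace.single 1 1 with he1
  set A : EuclideanSpace ℝ (Fin 2) × ℝ → E :=
    fun q => x + ((q.1 0) * q.2 * q.2) • w ((q.1 1) * q.2) with hAdef
  have hc0 : ContDiff ℝ (⊤ : ℕ∞) (fun q : EuclideanSpace ℝ (Fin 2) × ℝ => q.1 0) :=
    (EuclideanSpace.proj (0 : Fin 2) : EuclideanSpace ℝ (Fin 2) →L[ℝ] ℝ).contDiff.comp contDiff_fst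
  have hc1 : ContDiff ℝ (⊤ : ℕ∞) (fun q : EuclideanSpace ℝ (Fin 2) × ℝ => q.1 1) :=
    (EuclideanSpace.proj (1 : Fin 2) : EuclideanSpace ℝ (Fin 2) →L[ℝ] ℝ).contDiff.comp contDiff_fst
  have hA : ContDiff ℝ (⊤ : ℕ∞) A :=
    contDiff_const.add (((hc0.mul contDiff_snd).mul contDiff_snd).smul
      (hw.comp (hc1.mul contDiff_snd)))
  have hA0 : ∀ s, A (s, 0) = x := by intro s; simp [hAdef]
  obtain ⟨ψ, hψ, hψval⟩ := family_velocity Φ 2 A hA hA0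
  set c : ℝ → EuclideanSpace ℝ (Fin 2) := fun ε => (ε * ε) • e0 + ε • e1 with hcdef
  have hco : ∀ ε : ℝ, (c ε) 0 = ε * ε ∧ (c ε) 1 = ε := by
    intro ε
    constructor <;>
      simp [hcdef, he0, he1, EuclideanSpace.single_apply]
  -- slice at c 1 is β
  have hslice1 : (fun t => A (c 1, t)) = β := by
    funext t
    simp only [hAdef, (hco 1).1, (hco 1).2, one_mul]
    rw [← hwid t]
  -- scaling relation along c
  have hrel : ∀ ε ∈ Set.Icc (0:ℝ) 1, ψ (c ε) = ε • ψ (c 1) := by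
    intro ε hε
    have hslice : ContDiff ℝ (⊤ : ℕ∞) (fun t => A (c 1, t)) :=
      hA.comp (contDiff_const.prodMk contDiff_id)
    have heq : (fun t => A (c ε, t)) = (fun t => (fun u => A (c 1, u)) (ε * t)) := by
      funext t
      simp only [hAdef, (hco 1).1, (hco 1).2, (hco ε).1, (hco ε).2, one_mul]
      ring_nf
    rw [← hψval (c ε), ← hψval (c 1), heq]
    exact deriv_scale Φ hε hslice (hA0 _)
  -- the e1-line is constant 0
  have hzero : ∀ s2 : ℝ, ψ (s2 • e1) = 0 := by
    intro s2
    rw [← hψval]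
    have hx : (fun t => A (s2 • e1, t)) = (fun _ => x) := by
      funext t
      simp [hAdef, he1, he0, EuclideanSpace.single_apply]
    rw [hx, Φ.lift_const]
    simp
  -- derivative of ψ along curves
  have hψd : HasFDerivAt ψ (fderiv ℝ ψ 0) 0 :=
    ((hψ.differentiable (by simp)) 0).hasFDerivAt
  have hc00 : c 0 = 0 := by simp [hcdef]
  have hmul : HasDerivAt (fun ε : ℝ => ε * ε) 0 0 := by
    exact ((hasDerivAt_id' (0:ℝ)).mul (hasDerivAt_id' 0)).congr_deriv (by simp)
  have hc' : HasDerivAt c e1 0 := by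
    have h1 := hmul.smul_const e0
    have h2 := (hasDerivAt_id (0:ℝ)).smul_const e1
    exact (h1.add h2).congr_deriv (by simp)
  have hcomp : HasDerivAt (fun ε => ψ (c ε)) (fderiv ℝ ψ 0 e1) 0 := by
    have hψd' : HasFDerivAt ψ (fderiv ℝ ψ 0) (c 0) := by rw [hc00]; exact hψd
    exact hψd'.comp_hasDerivAt 0 hc'
  have hd' : HasDerivAt (fun ε : ℝ => ε • e1) e1 0 := by
    simpa using (hasDerivAt_id (0:ℝ)).smul_const e1
  have hdcomp : HasDerivAt (fun ε : ℝ => ψ (ε • e1)) (fderiv ℝ ψ 0 e1) 0 := by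
    have hψd' : HasFDerivAt ψ (fderiv ℝ ψ 0) ((0:ℝ) • e1) := by
      rw [zero_smul]; exact hψd
    exact hψd'.comp_hasDerivAt 0 hd'
  have hzfun : (fun ε : ℝ => ψ (ε • e1)) = fun _ => (0:F) := funext hzero
  rw [hzfun] at hdcomp
  have hkey0 : fderiv ℝ ψ 0 e1 = 0 := hdcomp.unique (hasDerivAt_const 0 0)
  have hgK : HasDerivAt (fun ε : ℝ => ε • ψ (c 1)) (ψ (c 1)) 0 := by
    simpa using (hasDerivAt_id (0:ℝ)).smul_const (ψ (c 1))
  have hfinal : fderiv ℝ ψ 0 e1 = ψ (c 1) :=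
    deriv_eq_of_eqOn_Icc hcomp hgK (fun ε hε => hrel ε hε)
  rw [← hslice1, hψval (c 1), ← hfinal, hkey0]

private lemma deriv_lift_eq_line (Φ : PathLiftingMap E F x p) {α : ℝ → E}
    (hα : ContDiff ℝ (⊤ : ℕ∞) α) (hα0 : α 0 = x) :
    deriv (Φ.lift α) 0 = deriv (Φ.lift (fun t => x + t • deriv α 0)) 0 := by
  set v : E := deriv α 0 with hv
  set β : ℝ → E := fun t => α t - t • v with hβdef
  have hβ : ContDiff ℝ (⊤ : ℕ∞) β := hα.sub (contDiff_id.smul contDiff_const)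
  have hβ0 : β 0 = x := by simp [hβdef, hα0]
  have hβ' : deriv β 0 = 0 := by
    have h1 : HasDerivAt α v 0 := ((hα.differentiable (by simp)) 0).hasDerivAt
    have h2 : HasDerivAt (fun t : ℝ => t • v) v 0 := by
      simpa using (hasDerivAt_id (0:ℝ)).smul_const v
    exact (h1.sub h2).deriv.trans (sub_self v)
  have hβlift : deriv (Φ.lift β) 0 = 0 := deriv_lift_zero_of_deriv_zero Φ hβ hβ0 hβ'
  set e0 : EuclideanSpace ℝ (Fin 3) := EuclideanSpace.single 0 1 with he0
  set e1 : EuclideanSpace ℝ (Fin 3) := EuclideanSpace.single 1 1 with he1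
  set e2 : EuclideanSpace ℝ (Fin 3) := EuclideanSpace.single 2 1 with he2
  set A : EuclideanSpace ℝ (Fin 3) × ℝ → E :=
    fun q => x + ((q.1 0) * q.2) • v + (q.1 1) • (α ((q.1 2) * q.2) - x - ((q.1 2) * q.2) • v)
    with hAdef
  have hc0 : ContDiff ℝ (⊤ : ℕ∞) (fun q : EuclideanSpace ℝ (Fin 3) × ℝ => q.1 0) :=
    (EuclideanSpace.proj (0 : Fin 3) : EuclideanSpace ℝ (Fin 3) →L[ℝ] ℝ).contDiff.comp contDiff_fst
  have hc1 : ContDiff ℝ (⊤ : ℕ∞) (fun q : EuclideanSpace ℝ (Fin 3) × ℝ => q.1 1) :=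
    (EuclideanSpace.proj (1 : Fin 3) : EuclideanSpace ℝ (Fin 3) →L[ℝ] ℝ).contDiff.comp contDiff_fst
  have hc2 : ContDiff ℝ (⊤ : ℕ∞) (fun q : EuclideanSpace ℝ (Fin 3) × ℝ => q.1 2) :=
    (EuclideanSpace.proj (2 : Fin 3) : EuclideanSpace ℝ (Fin 3) →L[ℝ] ℝ).contDiff.comp contDiff_fst
  have hA : ContDiff ℝ (⊤ : ℕ∞) A := by
    refine (contDiff_const.add ((hc0.mul contDiff_snd).smul contDiff_const)).add
      (hc1.smul (((hα.comp (hc2.mul contDiff_snd)).sub contDiff_const).sub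
        ((hc2.mul contDiff_snd).smul contDiff_const)))
  have hA0 : ∀ s, A (s, 0) = x := by intro s; simp [hAdef, hα0]
  obtain ⟨ψ, hψ, hψval⟩ := family_velocity Φ 3 A hA hA0
  set c : ℝ → EuclideanSpace ℝ (Fin 3) := fun ε => ε • e0 + e1 + ε • e2 with hcdef
  set b : ℝ → EuclideanSpace ℝ (Fin 3) := fun ε => ε • e0 + e1 with hbdef
  set d : ℝ → EuclideanSpace ℝ (Fin 3) := fun ε => e1 + ε • e2 with hddef
  have hcco : ∀ ε : ℝ, (c ε) 0 = ε ∧ (c ε) 1 = 1 ∧ (c ε) 2 = ε := by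
    intro ε
    refine ⟨?_, ?_, ?_⟩ <;> simp [hcdef, he0, he1, he2, EuclideanSpace.single_apply]
  have hbco : ∀ ε : ℝ, (b ε) 0 = ε ∧ (b ε) 1 = 1 ∧ (b ε) 2 = 0 := by
    intro ε
    refine ⟨?_, ?_, ?_⟩ <;> simp [hbdef, he0, he1, he2, EuclideanSpace.single_apply]
  have hdco : ∀ ε : ℝ, (d ε) 0 = 0 ∧ (d ε) 1 = 1 ∧ (d ε) 2 = ε := by
    intro ε
    refine ⟨?_, ?_, ?_⟩ <;> simp [hddef, he0, he1, he2, EuclideanSpace.single_apply]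
  -- the slice at c 1 is α
  have hslice1 : (fun t => A (c 1, t)) = α := by
    funext t
    simp only [hAdef, (hcco 1).1, (hcco 1).2.1, (hcco 1).2.2, one_mul, one_smul]
    abel
  -- relation along c
  have hrel : ∀ ε ∈ Set.Icc (0:ℝ) 1, ψ (c ε) = ε • ψ (c 1) := by
    intro ε hε
    have hslice : ContDiff ℝ (⊤ : ℕ∞) (fun t => A (c 1, t)) :=
      hA.comp (contDiff_const.prodMk contDiff_id)
    have heq : (fun t => A (c ε, t)) = (fun t => (fun u => A (c 1, u)) (ε * t)) := by
      funext t
      simp only [hAdef, (hcco 1).1, (hcco 1).2.1, (hcco 1).2.2,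
        (hcco ε).1, (hcco ε).2.1, (hcco ε).2.2, one_mul, one_smul]
    rw [← hψval (c ε), ← hψval (c 1), heq]
    exact deriv_scale Φ hε hslice (hA0 _)
  -- relation along b  (the line path direction)
  have hLinC : ContDiff ℝ (⊤ : ℕ∞) (fun t : ℝ => x + t • v) :=
    contDiff_const.add (contDiff_id.smul contDiff_const)
  have hLin0 : (fun t : ℝ => x + t • v) 0 = x := by simp
  have hbrel : ∀ ε ∈ Set.Icc (0:ℝ) 1,
      ψ (b ε) = ε • deriv (Φ.lift (fun t : ℝ => x + t • v)) 0 := by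
    intro ε hε
    have heq : (fun t => A (b ε, t)) = (fun t => (fun u : ℝ => x + u • v) (ε * t)) := by
      funext t
      simp [hAdef, (hbco ε).1, (hbco ε).2.1, (hbco ε).2.2, hα0]
    rw [← hψval (b ε), heq]
    exact deriv_scale Φ hε hLinC hLin0
  -- relation along d (the zero-velocity direction)
  have hdrel : ∀ ε ∈ Set.Icc (0:ℝ) 1, ψ (d ε) = 0 := by
    intro ε hε
    have heq : (fun t => A (d ε, t)) = (fun t => β (ε * t)) := by
      funext t
      simp only [hAdef, (hdco ε).1, (hdco ε).2.1, (hdco ε).2.2, zero_mul, zero_smul, one_smul,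
        hβdef]
      abel
    rw [← hψval (d ε), heq, deriv_scale Φ hε hβ hβ0, hβlift, smul_zero]
  -- derivative bookkeeping
  have hψd : HasFDerivAt ψ (fderiv ℝ ψ e1) e1 :=
    ((hψ.differentiable (by simp)) e1).hasFDerivAt
  have hc00 : c 0 = e1 := by simp [hcdef]
  have hb00 : b 0 = e1 := by simp [hbdef]
  have hd00 : d 0 = e1 := by simp [hddef]
  have hc' : HasDerivAt c (e0 + e2) 0 := by
    have h1 := (hasDerivAt_id (0:ℝ)).smul_const e0
    have h2 := (hasDerivAt_id (0:ℝ)).smul_const e2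
    exact ((h1.add_const e1).add h2).congr_deriv (by simp)
  have hb' : HasDerivAt b e0 0 := by
    exact (((hasDerivAt_id (0:ℝ)).smul_const e0).add_const e1).congr_deriv (by simp)
  have hd' : HasDerivAt d e2 0 := by
    exact (((hasDerivAt_id (0:ℝ)).smul_const e2).const_add e1).congr_deriv (by simp)
  have hcomp_c : HasDerivAt (fun ε => ψ (c ε)) (fderiv ℝ ψ e1 (e0 + e2)) 0 := by
    have hψd' : HasFDerivAt ψ (fderiv ℝ ψ e1) (c 0) := by rw [hc00]; exact hψd
    exact hψd'.comp_hasDerivAt 0 hc'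
  have hcomp_b : HasDerivAt (fun ε => ψ (b ε)) (fderiv ℝ ψ e1 e0) 0 := by
    have hψd' : HasFDerivAt ψ (fderiv ℝ ψ e1) (b 0) := by rw [hb00]; exact hψd
    exact hψd'.comp_hasDerivAt 0 hb'
  have hcomp_d : HasDerivAt (fun ε => ψ (d ε)) (fderiv ℝ ψ e1 e2) 0 := by
    have hψd' : HasFDerivAt ψ (fderiv ℝ ψ e1) (d 0) := by rw [hd00]; exact hψd
    exact hψd'.comp_hasDerivAt 0 hd'
  have keyc : fderiv ℝ ψ e1 (e0 + e2) = ψ (c 1) := by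
    have hgK : HasDerivAt (fun ε : ℝ => ε • ψ (c 1)) (ψ (c 1)) 0 := by
      simpa using (hasDerivAt_id (0:ℝ)).smul_const (ψ (c 1))
    exact deriv_eq_of_eqOn_Icc hcomp_c hgK (fun ε hε => hrel ε hε)
  have keyb : fderiv ℝ ψ e1 e0 = deriv (Φ.lift (fun t : ℝ => x + t • v)) 0 := by
    have hgK : HasDerivAt
        (fun ε : ℝ => ε • deriv (Φ.lift (fun t : ℝ => x + t • v)) 0)
        (deriv (Φ.lift (fun t : ℝ => x + t • v)) 0) 0 := by
      simpa using (hasDerivAt_id (0:ℝ)).smul_const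
        (deriv (Φ.lift (fun t : ℝ => x + t • v)) 0)
    exact deriv_eq_of_eqOn_Icc hcomp_b hgK (fun ε hε => hbrel ε hε)
  have keyd : fderiv ℝ ψ e1 e2 = 0 := by
    have hgK : HasDerivAt (fun _ : ℝ => (0:F)) 0 0 := hasDerivAt_const 0 0
    exact deriv_eq_of_eqOn_Icc hcomp_d hgK (fun ε hε => hdrel ε hε)
  have : deriv (Φ.lift α) 0 = ψ (c 1) := by rw [← hslice1, hψval (c 1)]
  rw [this, ← keyc, (fderiv ℝ ψ e1).map_add, keyb, keyd, add_zero]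

private lemma line_deriv_linear (Φ : PathLiftingMap E F x p) :
    ∃ L : E →L[ℝ] F, ∀ v : E, deriv (Φ.lift (fun t => x + t • v)) 0 = L v := by
  set A : EuclideanSpace ℝ (Fin (Module.finrank ℝ E)) × ℝ → E :=
    fun q => x + q.2 • (toEuclidean (E := E)).symm q.1 with hAdef
  have hA : ContDiff ℝ (⊤ : ℕ∞) A :=
    contDiff_const.add (contDiff_snd.smul
      ((toEuclidean (E := E)).symm.contDiff.comp contDiff_fst))
  have hA0 : ∀ s, A (s, 0) = x := by intro s; simp [hAdef]
  obtain ⟨ψ, hψ, hψval⟩ := family_velocity Φ _ A hA hA0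
  set g : E → F := fun v => deriv (Φ.lift (fun t => x + t • v)) 0 with hgdef
  have hgψ : ∀ v, g v = ψ ((toEuclidean (E := E)) v) := by
    intro v
    have hsl : (fun t => A ((toEuclidean (E := E)) v, t)) = (fun t : ℝ => x + t • v) := by
      funext t; simp [hAdef]
    rw [hgdef, ← hψval ((toEuclidean (E := E)) v), hsl]
  have hg : ContDiff ℝ (⊤ : ℕ∞) g := by
    have hfun : g = fun v => ψ ((toEuclidean (E := E)) v) := funext hgψ
    rw [hfun]
    exact hψ.comp (toEuclidean (E := E)).contDiff
  have hhom : ∀ v : E, ∀ ε ∈ Set.Icc (0:ℝ) 1, g (ε • v) = ε • g v := by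
    intro v ε hε
    have hLinC : ContDiff ℝ (⊤ : ℕ∞) (fun t : ℝ => x + t • v) :=
      contDiff_const.add (contDiff_id.smul contDiff_const)
    have hLin0 : (fun t : ℝ => x + t • v) 0 = x := by simp
    have heq : (fun t : ℝ => x + t • (ε • v)) = (fun t => (fun u : ℝ => x + u • v) (ε * t)) := by
      funext t
      rw [smul_smul, mul_comm]
    rw [hgdef]
    show deriv (Φ.lift (fun t : ℝ => x + t • (ε • v))) 0 = ε • g v
    rw [heq]
    exact deriv_scale Φ hε hLinC hLin0
  refine ⟨fderiv ℝ g 0, fun v => ?_⟩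
  have hgd : HasFDerivAt g (fderiv ℝ g 0) ((0:ℝ) • v) := by
    rw [zero_smul]; exact ((hg.differentiable (by simp)) 0).hasFDerivAt
  have hc : HasDerivAt (fun ε : ℝ => ε • v) v 0 := by
    simpa using (hasDerivAt_id (0:ℝ)).smul_const v
  have hcomp : HasDerivAt (fun ε : ℝ => g (ε • v)) (fderiv ℝ g 0 v) 0 :=
    by have := hgd.comp_hasDerivAt 0 hc; exact this
  have hgK : HasDerivAt (fun ε : ℝ => ε • g v) (g v) 0 := by
    simpa using (hasDerivAt_id (0:ℝ)).smul_const (g v)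
  exact (deriv_eq_of_eqOn_Icc hcomp hgK (fun ε hε => hhom v ε hε)).symm

end

/-- There is a unique linear map `L : E →ₗ[ℝ] F` computing the initial velocity of lifted
paths from the initial velocity downstairs; in particular, the horizontal set of all initial
velocities of lifted paths is a linear subspace of `F`, namely the range of `L`. -/
theorem exists_unique_linear_lift_of_velocities
    {E F : Type*} [NormedAddCommGroup E] [NormedSpace ℝ E] [FiniteDimensional ℝ E]
    [NormedAddCommGroup F] [NormedSpace ℝ F] [FiniteDimensional ℝ F]
    {x : E} {p : F} (Φ : PathLiftingMap E F x p) :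
    ∃! L : E →ₗ[ℝ] F,
      (∀ α : ℝ → E, ContDiff ℝ (⊤ : ℕ∞) α → α 0 = x → deriv (Φ.lift α) 0 = L (deriv α 0)) ∧
      {v : F | ∃ α : ℝ → E, ContDiff ℝ (⊤ : ℕ∞) α ∧ α 0 = x ∧ deriv (Φ.lift α) 0 = v}
        = (LinearMap.range L : Set F) := by
  obtain ⟨L, hL⟩ := line_deriv_linear Φ
  have hmain : ∀ α : ℝ → E, ContDiff ℝ (⊤ : ℕ∞) α → α 0 = x →
      deriv (Φ.lift α) 0 = L (deriv α 0) := by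
    intro α hα hα0
    rw [deriv_lift_eq_line Φ hα hα0, hL (deriv α 0)]
  have hLinC : ∀ v : E, ContDiff ℝ (⊤ : ℕ∞) (fun t : ℝ => x + t • v) := fun v =>
    contDiff_const.add (contDiff_id.smul contDiff_const)
  have hLin0 : ∀ v : E, (fun t : ℝ => x + t • v) 0 = x := by intro v; simp
  have hLinv : ∀ v : E, deriv (fun t : ℝ => x + t • v) 0 = v := by
    intro v
    have h : HasDerivAt (fun t : ℝ => x + t • v) v 0 := by
      simpa using ((hasDerivAt_id (0:ℝ)).smul_const v).const_add x
    exact h.deriv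
  refine ⟨L.toLinearMap, ⟨?_, ?_⟩, ?_⟩
  · intro α hα hα0
    exact hmain α hα hα0
  · ext w
    simp only [Set.mem_setOf_eq, SetLike.mem_coe, LinearMap.mem_range,
      ContinuousLinearMap.coe_coe]
    constructor
    · rintro ⟨α, hα, hα0, rfl⟩
      exact ⟨deriv α 0, (hmain α hα hα0).symm⟩
    · rintro ⟨u, rfl⟩
      exact ⟨fun t => x + t • u, hLinC u, hLin0 u, hL u⟩
  · rintro L' ⟨h1, _⟩
    ext v
    have h := h1 (fun t => x + t • v) (hLinC v) (hLin0 v)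
    rw [hLinv v] at h
    rw [← h]
    exact hL v
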